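/- Let α ∈ (0,1) and m ∈ ℕ₀. Then for every t ∈ [0,1], ∫₀ᵗ |∑_{k=0}^{2^m−1}(e_{m,k}(t) − e_{m,k}(s))| / (t−s)^{α+1} ds ≤ 2^{m(α − 1/2)} ( 2^α/α + (2^{α−1} + 1)/(1−α) ). -/

import Mathlib

open MeasureTheory Set

/-- The basic Faber–Schauder tent function. -/
noncomputable def e00 (t : ℝ) : ℝ := max (min t (1 - t)) 0

/-- The Faber–Schauder function `e_{m,k}`. -/
noncomputable def FS (m k : ℕ) (t : ℝ) : ℝ := (2 : ℝ) ^ (-(m : ℝ) / 2) * e00 (2 ^ m * t - k)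

/-!
The tents of level `m` sum to `2^{-m/2}` times the distance from `2^m t` to the nearest integer,
so the numerator of the integrand is at most `2^{-m/2} min (2^m (t - s)) 1`. After the
substitution `u = t - s` the integrand is dominated by `2^{-m/2} min (2^m u) 1 / u^{α+1}`, which
behaves like `u^{-α}` below `u = 2^{-m}` and like `u^{-α-1}` above it; integrating the two pieces
gives `2^{m(α-1/2)} (1/(1-α) + 1/α)`.
-/

section Round

variable {𝕜 : Type*} [Field 𝕜] [LinearOrder 𝕜] [IsStrictOrderedRing 𝕜] [FloorRing 𝕜]

lemma abs_sub_round_le_add (x y : 𝕜) : |x - round x| ≤ |y - round y| + |x - y| :=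
  calc |x - round x| ≤ |x - round y| := round_le x (round y)
    _ ≤ |x - y| + |y - round y| := abs_sub_le x y _
    _ = |y - round y| + |x - y| := add_comm _ _

lemma abs_abs_sub_round_sub_abs_sub_round_le (x y : 𝕜) :
    |(|x - round x| - |y - round y|)| ≤ min |x - y| (1 / 2) := by
  refine le_min (abs_sub_le_iff.2 ⟨?_, ?_⟩) ?_
  · linarith [abs_sub_round_le_add x y]
  · linarith [abs_sub_round_le_add y x, abs_sub_comm x y]
  · exact abs_sub_le_of_nonneg_of_le (abs_nonneg _) (abs_sub_round x) (abs_nonneg _)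
      (abs_sub_round y)

end Round

lemma e00_of_nonpos {x : ℝ} (hx : x ≤ 0) : e00 x = 0 :=
  max_eq_right ((min_le_left _ _).trans hx)

lemma e00_of_one_le {x : ℝ} (hx : 1 ≤ x) : e00 x = 0 :=
  max_eq_right ((min_le_right _ _).trans (by linarith))

lemma e00_sub_floor {x : ℝ} (hx : 0 ≤ x) : e00 (x - ⌊x⌋₊) = |x - round x| := by
  rw [natCast_floor_eq_intCast_floor hx, Int.self_sub_floor, abs_sub_round_eq_min, e00,
    max_eq_left (le_min (Int.fract_nonneg x) (by linarith [Int.fract_lt_one x]))]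

lemma sum_range_e00_sub_natCast {x : ℝ} (N : ℕ) (h0 : 0 ≤ x) (hN : x ≤ N) :
    ∑ k ∈ Finset.range N, e00 (x - k) = |x - round x| := by
  have hfl := Nat.floor_le h0
  have hlt := Nat.lt_floor_add_one x
  rw [Finset.sum_eq_single ⌊x⌋₊, e00_sub_floor h0]
  · intro k _ hk
    rcases hk.lt_or_gt with hk | hk
    · apply e00_of_one_le
      have : (k : ℝ) + 1 ≤ ⌊x⌋₊ := by exact_mod_cast hk
      linarith
    · apply e00_of_nonpos
      have : (⌊x⌋₊ : ℝ) + 1 ≤ k := by exact_mod_cast hk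
      linarith
  · intro hx
    have : (N : ℝ) ≤ ⌊x⌋₊ := by exact_mod_cast Finset.mem_range.not.1 hx |> not_lt.1
    exact e00_of_nonpos (by linarith)

@[fun_prop]
lemma continuous_FS (m k : ℕ) : Continuous (FS m k) := by
  unfold FS e00
  fun_prop

lemma sum_FS_eq (m : ℕ) {s : ℝ} (h0 : 0 ≤ s) (h1 : s ≤ 1) :
    ∑ k ∈ Finset.range (2 ^ m), FS m k s
      = (2 : ℝ) ^ (-(m : ℝ) / 2) * |2 ^ m * s - round ((2 : ℝ) ^ m * s)| := by
  simp only [FS, ← Finset.mul_sum]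
  rw [sum_range_e00_sub_natCast (2 ^ m) (by positivity)]
  push_cast
  exact mul_le_of_le_one_right (by positivity) h1

lemma abs_sum_FS_sub_le (m : ℕ) {s t : ℝ} (hs : s ∈ Icc (0 : ℝ) 1)
    (ht : t ∈ Icc (0 : ℝ) 1) :
    |∑ k ∈ Finset.range (2 ^ m), (FS m k t - FS m k s)|
      ≤ (2 : ℝ) ^ (-(m : ℝ) / 2) * min ((2 : ℝ) ^ m * |t - s|) (1 / 2) := by
  rw [Finset.sum_sub_distrib, sum_FS_eq m ht.1 ht.2, sum_FS_eq m hs.1 hs.2, ← mul_sub, abs_mul,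
    abs_of_pos (by positivity)]
  gcongr
  refine (abs_abs_sub_round_sub_abs_sub_round_le ((2 : ℝ) ^ m * t) (2 ^ m * s)).trans_eq ?_
  rw [← mul_sub, abs_mul, abs_of_pos (by positivity)]

noncomputable def truncKernel (α L u : ℝ) : ℝ := min (L * u) 1 / u ^ (α + 1)

namespace truncKernel

variable {α L : ℝ}

lemma nonneg (hL : 0 ≤ L) {u : ℝ} (hu : 0 ≤ u) : 0 ≤ truncKernel α L u :=
  div_nonneg (le_min (mul_nonneg hL hu) zero_le_one) (Real.rpow_nonneg hu _)

lemma eq_of_le_inv (hα : α ≠ 0) (hL : 0 < L) {u : ℝ} (hu : u ∈ Icc 0 L⁻¹) :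
    truncKernel α L u = L * u ^ (-α) := by
  have hLu : L * u ≤ 1 := by rw [← le_div_iff₀' hL, one_div]; exact hu.2
  rw [truncKernel, min_eq_left hLu]
  rcases hu.1.eq_or_lt with rfl | hu0
  · simp [Real.zero_rpow (neg_ne_zero.2 hα)]
  · rw [Real.rpow_add_one hu0.ne', Real.rpow_neg hu0.le]
    field_simp

lemma eq_of_inv_le (hL : 0 < L) {u : ℝ} (hu : L⁻¹ ≤ u) :
    truncKernel α L u = u ^ (-(α + 1)) := by
  have hLu : 1 ≤ L * u := by rw [← div_le_iff₀' hL, one_div]; exact hu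
  have hu0 : 0 < u := (inv_pos.2 hL).trans_le hu
  rw [truncKernel, min_eq_right hLu, one_div, Real.rpow_neg hu0.le]

lemma eqOn_uIcc_zero_inv (hα : α ≠ 0) (hL : 0 < L) :
    EqOn (truncKernel α L) (fun u => L * u ^ (-α)) (uIcc 0 L⁻¹) := by
  rw [uIcc_of_le (inv_pos.2 hL).le]
  exact fun u hu => eq_of_le_inv hα hL hu

lemma eqOn_uIcc_inv (hL : 0 < L) {S : ℝ} (hS : L⁻¹ ≤ S) :
    EqOn (truncKernel α L) (fun u => u ^ (-(α + 1))) (uIcc L⁻¹ S) := by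
  rw [uIcc_of_le hS]
  exact fun u hu => eq_of_inv_le hL hu.1

lemma integral_zero_inv (hα : α ∈ Ioo 0 1) (hL : 0 < L) :
    ∫ u in 0..L⁻¹, truncKernel α L u = L ^ α / (1 - α) := by
  rw [intervalIntegral.integral_congr (eqOn_uIcc_zero_inv hα.1.ne' hL),
    intervalIntegral.integral_const_mul, integral_rpow (Or.inl (by linarith [hα.2])),
    Real.zero_rpow (by linarith [hα.2]), Real.inv_rpow hL.le, ← Real.rpow_neg hL.le,
    sub_zero, neg_add, neg_neg, ← mul_div_assoc,
    ← Real.rpow_one_add' hL.le (by linarith [hα.1])]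
  ring_nf

lemma integral_inv_le (hα : 0 < α) (hL : 0 < L) {S : ℝ} (hS : L⁻¹ ≤ S) :
    ∫ u in L⁻¹..S, truncKernel α L u ≤ L ^ α / α := by
  have h0 : (0 : ℝ) ∉ uIcc L⁻¹ S := by
    rw [uIcc_of_le hS]; exact fun h => (inv_pos.2 hL).not_ge h.1
  have hS0 : 0 ≤ S ^ (-α) := Real.rpow_nonneg ((inv_pos.2 hL).le.trans hS) _
  rw [intervalIntegral.integral_congr (eqOn_uIcc_inv hL hS),
    integral_rpow (Or.inr ⟨by linarith, h0⟩), Real.inv_rpow hL.le, ← Real.rpow_neg hL.le,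
    show -(α + 1) + 1 = -α by ring, neg_neg, div_neg, ← neg_div, neg_sub]
  gcongr
  linarith

lemma intervalIntegrable_zero_inv (hα : α ∈ Ioo 0 1) (hL : 0 < L) :
    IntervalIntegrable (truncKernel α L) volume 0 L⁻¹ :=
  (((intervalIntegral.intervalIntegrable_rpow' (by linarith [hα.2])).const_mul L).congr
    ((eqOn_uIcc_zero_inv hα.1.ne' hL).symm.mono uIoc_subset_uIcc))

lemma intervalIntegrable_inv (hL : 0 < L) {S : ℝ} (hS : L⁻¹ ≤ S) :
    IntervalIntegrable (truncKernel α L) volume L⁻¹ S := by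
  refine (intervalIntegral.intervalIntegrable_rpow (Or.inr ?_)).congr
    ((eqOn_uIcc_inv hL hS).symm.mono uIoc_subset_uIcc)
  rw [uIcc_of_le hS]; exact fun h => (inv_pos.2 hL).not_ge h.1

lemma intervalIntegrable (hα : α ∈ Ioo 0 1) (hL : 0 < L) {T : ℝ} (hT : 0 ≤ T) :
    IntervalIntegrable (truncKernel α L) volume 0 T := by
  refine ((intervalIntegrable_zero_inv hα hL).trans
    (intervalIntegrable_inv hL (le_max_right T L⁻¹))).mono_set
    (uIcc_subset_uIcc left_mem_uIcc ?_)
  rw [uIcc_of_le (hT.trans (le_max_left _ _))]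
  exact ⟨hT, le_max_left _ _⟩

theorem integral_le (hα : α ∈ Ioo 0 1) (hL : 0 < L) {T : ℝ} (hT : 0 ≤ T) :
    ∫ u in 0..T, truncKernel α L u ≤ L ^ α * (1 / α + 1 / (1 - α)) := by
  set S := max T L⁻¹
  have h0 := intervalIntegrable_zero_inv hα hL
  have h1 := intervalIntegrable_inv (α := α) hL (le_max_right T L⁻¹)
  calc ∫ u in 0..T, truncKernel α L u ≤ ∫ u in 0..S, truncKernel α L u :=
        intervalIntegral.integral_mono_interval le_rfl hT (le_max_left _ _)
          ((ae_restrict_iff' measurableSet_Ioc).2 (Filter.Eventually.of_forall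
            fun _ hu => nonneg hL.le hu.1.le)) (h0.trans h1)
    _ = L ^ α / (1 - α) + ∫ u in L⁻¹..S, truncKernel α L u := by
        rw [← intervalIntegral.integral_add_adjacent_intervals h0 h1, integral_zero_inv hα hL]
    _ ≤ L ^ α / (1 - α) + L ^ α / α := by
        gcongr
        exact integral_inv_le hα.1 hL (le_max_right _ _)
    _ = L ^ α * (1 / α + 1 / (1 - α)) := by ring

end truncKernel

theorem integral_abs_div_rpow_le {α L A T : ℝ} (hα : α ∈ Ioo 0 1) (hL : 0 < L) (hA : 0 ≤ A)
    (hT : 0 ≤ T) {φ : ℝ → ℝ} (hφm : AEStronglyMeasurable φ)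
    (hφ : ∀ u ∈ Ioc 0 T, |φ u| ≤ A * min (L * u) 1) :
    ∫ u in 0..T, |φ u| / u ^ (α + 1) ≤ A * (L ^ α * (1 / α + 1 / (1 - α))) := by
  have hle : ∀ u ∈ Ioc 0 T, |φ u| / u ^ (α + 1) ≤ A * truncKernel α L u := fun u hu => by
    rw [truncKernel, mul_div_assoc']
    exact div_le_div_of_nonneg_right (hφ u hu) (Real.rpow_nonneg hu.1.le _)
  have hK := (truncKernel.intervalIntegrable hα hL hT).const_mul A
  have hint : IntervalIntegrable (fun u => |φ u| / u ^ (α + 1)) volume 0 T := by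
    refine hK.mono_fun
      (hφm.norm.div₀ (measurable_id.pow_const _).aestronglyMeasurable).restrict ?_
    rw [uIoc_of_le hT]
    refine (ae_restrict_iff' measurableSet_Ioc).2 (Filter.Eventually.of_forall fun u hu => ?_)
    simp only [Real.norm_eq_abs]
    rw [abs_of_nonneg (div_nonneg (abs_nonneg _) (Real.rpow_nonneg hu.1.le _))]
    exact (hle u hu).trans (le_abs_self _)
  calc ∫ u in 0..T, |φ u| / u ^ (α + 1) ≤ ∫ u in 0..T, A * truncKernel α L u := by
        refine intervalIntegral.integral_mono_on hT hint hK fun u hu => ?_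
        rcases hu.1.eq_or_lt with rfl | hu0
        -- at `u = 0` both sides are junk values `x / 0 = 0`
        · simp [Real.zero_rpow (by linarith [hα.1] : α + 1 ≠ 0), truncKernel]
        · exact hle u ⟨hu0, hu.2⟩
    _ ≤ A * (L ^ α * (1 / α + 1 / (1 - α))) := by
        rw [intervalIntegral.integral_const_mul]
        exact mul_le_mul_of_nonneg_left (truncKernel.integral_le hα hL hT) hA

theorem integral_abs_sum_FS_sub_div_rpow_le {α : ℝ} (hα : α ∈ Ioo 0 1) (m : ℕ) {t : ℝ}
    (ht : t ∈ Icc (0 : ℝ) 1) :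
    (∫ s in (0 : ℝ)..t,
        |∑ k ∈ Finset.range (2 ^ m), (FS m k t - FS m k s)| / (t - s) ^ (α + 1)) ≤
      (2 : ℝ) ^ ((m : ℝ) * (α - 1 / 2)) * (1 / α + 1 / (1 - α)) := by
  set φ : ℝ → ℝ := fun u => ∑ k ∈ Finset.range (2 ^ m), (FS m k t - FS m k (t - u))
  have hsubst := intervalIntegral.integral_comp_sub_left (a := 0) (b := t)
    (fun u => |φ u| / u ^ (α + 1)) t
  simp only [φ, sub_sub_cancel, sub_self, sub_zero] at hsubst
  have hφ : ∀ u ∈ Ioc 0 t, |φ u| ≤ (2 : ℝ) ^ (-(m : ℝ) / 2) * min (2 ^ m * u) 1 := by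
    intro u hu
    have hs : t - u ∈ Icc (0 : ℝ) 1 := ⟨by linarith [hu.2], by linarith [hu.1, ht.2]⟩
    refine (abs_sum_FS_sub_le m hs ht).trans ?_
    rw [sub_sub_cancel, abs_of_pos hu.1]
    gcongr
    norm_num
  have hscale :
      (2 : ℝ) ^ (-(m : ℝ) / 2) * ((2 : ℝ) ^ m) ^ α = 2 ^ ((m : ℝ) * (α - 1 / 2)) := by
    rw [← Real.rpow_natCast_mul (by norm_num), ← Real.rpow_add (by norm_num)]
    ring_nf
  rw [hsubst, ← hscale, mul_assoc]
  exact integral_abs_div_rpow_le hα (by positivity) (by positivity) ht.1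
    (by fun_prop : Continuous φ).aestronglyMeasurable hφ

theorem FS_sum_seminorm_bound (α : ℝ) (hα : α ∈ Set.Ioo (0 : ℝ) 1) (m : ℕ)
    (t : ℝ) (ht : t ∈ Set.Icc (0 : ℝ) 1) :
    (∫ s in (0 : ℝ)..t,
        |∑ k ∈ Finset.range (2 ^ m), (FS m k t - FS m k s)| / (t - s) ^ (α + 1)) ≤
      (2 : ℝ) ^ ((m : ℝ) * (α - 1 / 2)) *
        ((2 : ℝ) ^ α / α + ((2 : ℝ) ^ (α - 1) + 1) / (1 - α)) := by
  refine (integral_abs_sum_FS_sub_div_rpow_le hα m ht).trans ?_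
  have h2α : 1 ≤ (2 : ℝ) ^ α := Real.one_le_rpow (by norm_num) hα.1.le
  have h2α' : 0 ≤ (2 : ℝ) ^ (α - 1) := Real.rpow_nonneg (by norm_num) _
  gcongr <;> linarith [hα.1, hα.2]
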